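/- Let μ ∈ ℝ, k ∈ ℝ, a ∈ ℝⁿ, and define c(x) := (−k + μ⟨a,x⟩)/(2√(1+μ|x|²)) on Ω := {x ∈ ℝⁿ : 1+μ|x|² > 0}. Let c_i := ∂c/∂xⁱ and h^{ij}(x) := (1+μ|x|²)(δ^{ij} + μxⁱxʲ) (the inverse of the constant-curvature metric h_μ). Then for all x ∈ Ω: h^{ij}(x)·c_i(x)·c_j(x) + μ·c(x)² = μ(k² + μ|a|²)/4; in particular, when μ > 0, δ := √(‖∇c‖²_{h_μ} + μc²) is the constant √(μ(k² + μ|a|²))/2, and h^{ij}c_ic_j = μ(4ρ² − 4c² − μ)/4 where ρ² := (k² + (1+|a|²)μ)/4 = δ²/μ + μ/4. -/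

import Mathlib

open scoped BigOperators

noncomputable section

abbrev Vec (n : ℕ) := Fin n → ℝ

/-- The conformal factor `c(x) = (−k + μ⟨a,x⟩)/(2√(1+μ|x|²))`. -/
def cFun {n : ℕ} (μ k : ℝ) (a : Vec n) (x : Vec n) : ℝ :=
  (-k + μ * ∑ i, a i * x i) / (2 * Real.sqrt (1 + μ * ∑ i, (x i)^2))

/-- `c_i = ∂c/∂xⁱ`. -/
def cDeriv {n : ℕ} (μ k : ℝ) (a : Vec n) (i : Fin n) (x : Vec n) : ℝ :=
  fderiv ℝ (cFun μ k a) x (Pi.single i 1)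

/-- The inverse metric `h^{ij}(x) = (1+μ|x|²)(δ^{ij} + μxⁱxʲ)` of `h_μ`. -/
def hInv {n : ℕ} (μ : ℝ) (x : Vec n) (i j : Fin n) : ℝ :=
  (1 + μ * ∑ l, (x l)^2) * ((if i = j then (1:ℝ) else 0) + μ * x i * x j)


/-!
Along the line `s ↦ x + s • v` the function `c` is an explicit quotient of a linear function by
the square root of a quadratic one, so its directional derivative is
`μ (t ⟨a,v⟩ − N ⟨x,v⟩) / (2 t √t)` with `t = 1 + μ|x|²` and `N = −k + μ⟨a,x⟩`.
Since `h^{ij} = t (δ^{ij} + μ xⁱxʲ)`, the quadratic form is `t (|∇c|² + μ ⟨x,∇c⟩²)`, and once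
`√t² = t` is used the claimed identity is a polynomial identity in `k, μ, ⟨a,a⟩, ⟨a,x⟩, ⟨x,x⟩`.
-/

open Matrix

variable {n : ℕ}

theorem sum_sq_eq_dotProduct (x : Vec n) : ∑ i, (x i)^2 = x ⬝ᵥ x := by
  simp only [dotProduct, sq]

theorem cFun_eq_dotProduct (μ k : ℝ) (a x : Vec n) :
    cFun μ k a x = (-k + μ * a ⬝ᵥ x) / (2 * Real.sqrt (1 + μ * x ⬝ᵥ x)) := by
  rw [cFun, sum_sq_eq_dotProduct]; rfl

theorem hasLineDerivAt_cFun (μ k : ℝ) (a x v : Vec n) (hx : 0 < 1 + μ * x ⬝ᵥ x) :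
    HasLineDerivAt ℝ (cFun μ k a)
      (μ * ((1 + μ * x ⬝ᵥ x) * a ⬝ᵥ v - (-k + μ * a ⬝ᵥ x) * x ⬝ᵥ v) /
        (2 * (1 + μ * x ⬝ᵥ x) * Real.sqrt (1 + μ * x ⬝ᵥ x))) x v := by
  rw [HasLineDerivAt]
  have hline : ∀ s : ℝ, cFun μ k a (x + s • v) = (-k + μ * (a ⬝ᵥ x + s * a ⬝ᵥ v)) /
      (2 * Real.sqrt (1 + μ * (x ⬝ᵥ x + 2 * s * x ⬝ᵥ v + s ^ 2 * v ⬝ᵥ v))) := fun s => by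
    simp only [cFun_eq_dotProduct, dotProduct_add, add_dotProduct, dotProduct_smul, smul_dotProduct,
      smul_eq_mul, dotProduct_comm v x]
    ring_nf
  simp only [hline]
  have hNum : HasDerivAt (fun s : ℝ => -k + μ * (a ⬝ᵥ x + s * a ⬝ᵥ v)) (μ * a ⬝ᵥ v) 0 := by
    simpa using
      ((((hasDerivAt_id (0:ℝ)).mul_const (a ⬝ᵥ v)).const_add (a ⬝ᵥ x)).const_mul μ).const_add (-k)
  have hRad : HasDerivAt (fun s : ℝ => 1 + μ * (x ⬝ᵥ x + 2 * s * x ⬝ᵥ v + s ^ 2 * v ⬝ᵥ v))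
      (μ * (2 * x ⬝ᵥ v)) 0 := by
    have := ((((hasDerivAt_id (0:ℝ)).const_mul 2).mul_const (x ⬝ᵥ v)).const_add (x ⬝ᵥ x)).add
      ((hasDerivAt_pow 2 (0:ℝ)).mul_const (v ⬝ᵥ v))
    simpa using (this.const_mul μ).const_add 1
  have hDen := (hRad.sqrt (by simpa using hx.ne')).const_mul 2
  have hs := Real.sqrt_pos.2 hx
  refine (hNum.div hDen (by simpa using hs.ne')).congr_deriv ?_
  simp only [mul_zero, zero_mul, add_zero, zero_pow two_ne_zero]
  field_simp
  rw [Real.sq_sqrt hx.le]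

theorem differentiableAt_cFun (μ k : ℝ) (a x : Vec n) (hx : 0 < 1 + μ * x ⬝ᵥ x) :
    DifferentiableAt ℝ (cFun μ k a) x := by
  rw [funext (cFun_eq_dotProduct μ k a)]
  simp only [dotProduct]
  fun_prop (disch := positivity)

theorem fderiv_cFun_apply (μ k : ℝ) (a x v : Vec n) (hx : 0 < 1 + μ * x ⬝ᵥ x) :
    fderiv ℝ (cFun μ k a) x v =
      μ * ((1 + μ * x ⬝ᵥ x) * a ⬝ᵥ v - (-k + μ * a ⬝ᵥ x) * x ⬝ᵥ v) /
        (2 * (1 + μ * x ⬝ᵥ x) * Real.sqrt (1 + μ * x ⬝ᵥ x)) := by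
  rw [← (differentiableAt_cFun μ k a x hx).lineDeriv_eq_fderiv]
  exact (hasLineDerivAt_cFun μ k a x v hx).lineDeriv

theorem cDeriv_eq_smul (μ k : ℝ) (a x : Vec n) (hx : 0 < 1 + μ * x ⬝ᵥ x) :
    (cDeriv μ k a · x) = (μ / (2 * (1 + μ * x ⬝ᵥ x) * Real.sqrt (1 + μ * x ⬝ᵥ x))) •
      ((1 + μ * x ⬝ᵥ x) • a - (-k + μ * a ⬝ᵥ x) • x) := by
  funext i
  simp only [cDeriv, fderiv_cFun_apply μ k a x _ hx, dotProduct_single, mul_one, Pi.smul_apply,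
    Pi.sub_apply, smul_eq_mul]
  ring

theorem sum_hInv_mul_mul (μ : ℝ) (x g : Vec n) :
    ∑ i, ∑ j, hInv μ x i j * g i * g j = (1 + μ * x ⬝ᵥ x) * (g ⬝ᵥ g + μ * (x ⬝ᵥ g) ^ 2) := by
  calc ∑ i, ∑ j, hInv μ x i j * g i * g j
      = ∑ i, ∑ j, (1 + μ * x ⬝ᵥ x) *
          ((if i = j then g i * g j else 0) + μ * ((x i * g i) * (x j * g j))) := by
        refine Finset.sum_congr rfl fun i _ => Finset.sum_congr rfl fun j _ => ?_
        rw [hInv, sum_sq_eq_dotProduct]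
        split_ifs <;> ring
    _ = (1 + μ * x ⬝ᵥ x) * (∑ i, g i * g i + μ * ((∑ i, x i * g i) * ∑ j, x j * g j)) := by
        simp only [← Finset.mul_sum, Finset.sum_add_distrib, Finset.sum_ite_eq, Finset.mem_univ,
          if_true, Finset.sum_mul_sum]
    _ = (1 + μ * x ⬝ᵥ x) * (g ⬝ᵥ g + μ * (x ⬝ᵥ g) ^ 2) := by
        rw [sq]; rfl

theorem sum_hInv_cDeriv_add_mul_cFun_sq (μ k : ℝ) (a x : Vec n) (hx : 0 < 1 + μ * x ⬝ᵥ x) :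
    ∑ i, ∑ j, hInv μ x i j * cDeriv μ k a i x * cDeriv μ k a j x + μ * cFun μ k a x ^ 2 =
      μ * (k ^ 2 + μ * a ⬝ᵥ a) / 4 := by
  rw [sum_hInv_mul_mul μ x (cDeriv μ k a · x), cDeriv_eq_smul μ k a x hx, cFun_eq_dotProduct]
  simp only [dotProduct_smul, smul_dotProduct, dotProduct_sub, sub_dotProduct, smul_eq_mul,
    dotProduct_comm x a]
  have hs := Real.sqrt_pos.2 hx
  field_simp
  rw [Real.sq_sqrt hx.le]
  ring

/-- For `c(x) = (−k + μ⟨a,x⟩)/(2√(1+μ|x|²))` one has, on `{1+μ|x|² > 0}`,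
`h^{ij}c_ic_j + μc² = μ(k² + μ|a|²)/4`; in particular for `μ > 0`,
`δ := √(‖∇c‖²_{h_μ} + μc²)` is the constant `√(μ(k² + μ|a|²))/2` and
`h^{ij}c_ic_j = μ(4ρ² − 4c² − μ)/4` where `ρ² := (k² + (1+|a|²)μ)/4 = δ²/μ + μ/4`. -/
theorem stmt_14 {n : ℕ} (μ k : ℝ) (a : Vec n) :
    ∀ x : Vec n, 0 < 1 + μ * ∑ l, (x l)^2 →
      ((∑ i, ∑ j, hInv μ x i j * cDeriv μ k a i x * cDeriv μ k a j x)
          + μ * (cFun μ k a x)^2 = μ * (k^2 + μ * ∑ i, (a i)^2) / 4) ∧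
      (0 < μ →
        Real.sqrt ((∑ i, ∑ j, hInv μ x i j * cDeriv μ k a i x * cDeriv μ k a j x)
            + μ * (cFun μ k a x)^2)
          = Real.sqrt (μ * (k^2 + μ * ∑ i, (a i)^2)) / 2 ∧
        (∑ i, ∑ j, hInv μ x i j * cDeriv μ k a i x * cDeriv μ k a j x)
          = μ * (4 * ((k^2 + (1 + ∑ i, (a i)^2) * μ) / 4)
              - 4 * (cFun μ k a x)^2 - μ) / 4 ∧
        (k^2 + (1 + ∑ i, (a i)^2) * μ) / 4
          = (Real.sqrt (μ * (k^2 + μ * ∑ i, (a i)^2)) / 2)^2 / μ + μ / 4) := by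
  intro x hx
  rw [sum_sq_eq_dotProduct] at hx
  simp only [sum_sq_eq_dotProduct]
  have key := sum_hInv_cDeriv_add_mul_cFun_sq μ k a x hx
  refine ⟨key, fun hμ => ?_⟩
  have ha : 0 ≤ a ⬝ᵥ a := by simpa using dotProduct_self_star_nonneg a
  have hδ : 0 ≤ μ * (k ^ 2 + μ * a ⬝ᵥ a) := by positivity
  refine ⟨?_, by linear_combination key, ?_⟩
  · rw [key, Real.sqrt_div' _ (by norm_num : (0:ℝ) ≤ 4),
      show (4 : ℝ) = 2 ^ 2 by norm_num, Real.sqrt_sq zero_le_two]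
  · rw [div_pow, Real.sq_sqrt hδ]
    field_simp
    ring
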